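/- If two well-formed global types G and G' type the same network N, then ES(G) and ES(G') have exactly the same set of events, and hence ES(G) = ES(G') as Prime Event Structures. -/

import Mathlib

structure Comm (P L : Type) where
  sender : P
  receiver : P
  label : L

def play {P L : Type} (α : Comm P L) : Set P := {α.sender, α.receiver}

abbrev Trace (P L : Type) := List (Comm P L)

def playT {P L : Type} : Trace P L → Set P
  | [] => ∅
  | α :: σ => play α ∪ playT σ

/-- Permutation equivalence: least equivalence relation swapping adjacent
communications with disjoint participant sets. -/
inductive PermEq {P L : Type} : Trace P L → Trace P L → Prop
  | swap (σ σ' : Trace P L) (α α' : Comm P L) (h : play α ∩ play α' = ∅) :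
      PermEq (σ ++ α :: α' :: σ') (σ ++ α' :: α :: σ')
  | refl (σ : Trace P L) : PermEq σ σ
  | symm {σ σ' : Trace P L} : PermEq σ σ' → PermEq σ' σ
  | trans {σ σ' σ'' : Trace P L} : PermEq σ σ' → PermEq σ' σ'' → PermEq σ σ''

/-- A non-empty trace is pointed if every communication except the last shares
a participant with some later communication in the trace. -/
def IsPointed {P L : Type} (σ : Trace P L) : Prop :=
  σ ≠ [] ∧ ∀ i (hi : i + 1 < σ.length),
    ∃ j, i < j ∧ ∃ hj : j < σ.length,
      (play (σ.get ⟨i, by omega⟩) ∩ play (σ.get ⟨j, hj⟩)).Nonempty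

instance permSetoid (P L : Type) : Setoid (Trace P L) :=
  ⟨PermEq, ⟨PermEq.refl, PermEq.symm, PermEq.trans⟩⟩

/-- G-events live in the quotient of traces by permutation equivalence. -/
abbrev GEvent (P L : Type) := Quotient (permSetoid P L)

/-- A g-event proper is the class of a pointed trace. -/
def IsGEvent {P L : Type} (γ : GEvent P L) : Prop :=
  ∃ σ : Trace P L, IsPointed σ ∧ γ = ⟦σ⟧

open Classical in
/-- Causal prefixing on traces: prepend `α` iff its participants meet those of `σ`. -/
noncomputable def cpre {P L : Type} (α : Comm P L) (σ : Trace P L) : Trace P L :=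
  if (play α ∩ playT σ).Nonempty then α :: σ else σ

/-- `evFull σ` is (a canonical representative of) the g-event generated by `σ`. -/
noncomputable def evFull {P L : Type} : Trace P L → Trace P L
  | [] => []
  | [α] => [α]
  | α :: β :: σ => cpre α (evFull (β :: σ))

lemma playT_append {P L : Type} (σ τ : Trace P L) :
    playT (σ ++ τ) = playT σ ∪ playT τ := by
  induction σ with
  | nil => simp [playT]
  | cons α σ ih => simp [playT, ih, Set.union_assoc]

lemma PermEq.playT_eq {P L : Type} {σ σ' : Trace P L} (h : PermEq σ σ') :
    playT σ = playT σ' := by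
  induction h with
  | swap σ σ' α α' h =>
      simp [playT_append, playT, Set.union_left_comm, Set.union_comm, Set.union_assoc]
  | refl => rfl
  | symm _ ih => exact ih.symm
  | trans _ _ ih1 ih2 => exact ih1.trans ih2

lemma PermEq.cons {P L : Type} {σ σ' : Trace P L} (α : Comm P L) (h : PermEq σ σ') :
    PermEq (α :: σ) (α :: σ') := by
  induction h with
  | swap τ τ' β β' hd => exact PermEq.swap (α :: τ) τ' β β' hd
  | refl => exact PermEq.refl _
  | symm _ ih => exact ih.symm
  | trans _ _ ih1 ih2 => exact ih1.trans ih2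

/-- Causal prefixing of a g-event by a communication. -/
noncomputable def cprefix {P L : Type} (α : Comm P L) : GEvent P L → GEvent P L :=
  Quotient.map (cpre α) (by
    intro σ σ' h
    by_cases hc : (play α ∩ playT σ').Nonempty
    · show PermEq (cpre α σ) (cpre α σ')
      unfold cpre
      rw [h.playT_eq, if_pos hc, if_pos hc]
      exact PermEq.cons α h
    · simpa [cpre, h.playT_eq, hc] using h)

/-- Causal prefixing of a g-event by a trace. -/
noncomputable def cprefixT {P L : Type} : Trace P L → GEvent P L → GEvent P L
  | [], γ => γ
  | α :: σ, γ => cprefix α (cprefixT σ γ)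

/-- Causality on g-events. -/
def GCause {P L : Type} (γ γ' : GEvent P L) : Prop :=
  ∃ σ σ' : Trace P L, γ = ⟦σ⟧ ∧ γ' = ⟦σ ++ σ'⟧

/-- Conflict on g-events. -/
def GConflict {P L : Type} (γ γ' : GEvent P L) : Prop :=
  ∃ (σ σ₁ σ₂ : Trace P L) (p q : P) (l₁ l₂ : L), l₁ ≠ l₂ ∧
    γ = ⟦σ ++ ⟨p, q, l₁⟩ :: σ₁⟧ ∧ γ' = ⟦σ ++ ⟨p, q, l₂⟩ :: σ₂⟧

/-! Session fidelity for `G` followed by subject reduction for `G'` turns every trace of `G`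
into a trace of `G'` through the common network, and symmetrically; since the events of a
global type are the events generated by its traces, the two event sets coincide. -/

theorem gStep_of_types_of_types {P L GT Net : Type}
    {GStep : GT → Trace P L → Prop} {NStep : Net → Trace P L → Prop} {Types : Net → GT → Prop}
    (fidelity : ∀ N G σ, Types N G → GStep G σ → NStep N σ)
    (subjectReduction : ∀ N G σ, Types N G → NStep N σ → GStep G σ)
    {G G' : GT} {N : Net} (hT : Types N G) (hT' : Types N G') {σ : Trace P L}
    (hσ : GStep G σ) : GStep G' σ :=
  subjectReduction N G' σ hT' (fidelity N G σ hT hσ)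

theorem events_subset_of_gStep_imp {P L GT : Type}
    {TrOf GStep : GT → Trace P L → Prop} {EV : GT → Set (GEvent P L)}
    (hEV : ∀ G, EV G = {γ | ∃ σ, TrOf G σ ∧ γ = ⟦evFull σ⟧})
    (h1 : ∀ G σ, TrOf G σ → GStep G σ)
    (h2 : ∀ G σ, GStep G σ → (⟦evFull σ⟧ : GEvent P L) ∈ EV G)
    {G G' : GT} (hstep : ∀ σ, GStep G σ → GStep G' σ) :
    EV G ⊆ EV G' := by
  rw [hEV G]
  rintro _ ⟨σ, hσ, rfl⟩
  exact h2 G' σ (hstep σ (h1 G σ hσ))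

theorem unique_PES_interpretation_general {P L GT Net : Type}
    (TrOf : GT → Trace P L → Prop)        -- σ ∈ Tr⁺(G)
    (GStep : GT → Trace P L → Prop)       -- G can perform the trace σ
    (NStep : Net → Trace P L → Prop)      -- N can perform the trace σ
    (Types : Net → GT → Prop)             -- ⊢ N : G
    (EV : GT → Set (GEvent P L))          -- E(G)
    (hEV : ∀ G, EV G = {γ | ∃ σ, TrOf G σ ∧ γ = ⟦evFull σ⟧})
    (h1 : ∀ G σ, TrOf G σ → GStep G σ)
    (h2 : ∀ G σ, GStep G σ → (⟦evFull σ⟧ : GEvent P L) ∈ EV G)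
    (h3 : ∀ N G σ, Types N G → GStep G σ → NStep N σ)  -- Session Fidelity
    (h4 : ∀ N G σ, Types N G → NStep N σ → GStep G σ)  -- Subject Reduction
    (G G' : GT) (N : Net)
    (hT : Types N G) (hT' : Types N G') :
    EV G = EV G' :=
  (events_subset_of_gStep_imp hEV h1 h2 fun _ => gStep_of_types_of_types h3 h4 hT hT').antisymm
    (events_subset_of_gStep_imp hEV h1 h2 fun _ => gStep_of_types_of_types h3 h4 hT' hT)

/-- if two well-formed global types G and G' type the same network
N, then ES(G) and ES(G') have the same set of events, hence ES(G) = ES(G')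
(the causality and conflict relations are intrinsic to the events).
Global types, networks, their LTSs and the typing judgement are abstracted,
together with hypotheses (1)-(4) of the context. -/
theorem unique_PES_interpretation {P L GT Net : Type}
    (TrOf : GT → Trace P L → Prop)        -- σ ∈ Tr⁺(G)
    (GStep : GT → Trace P L → Prop)       -- G can perform the trace σ
    (NStep : Net → Trace P L → Prop)      -- N can perform the trace σ
    (Types : Net → GT → Prop)             -- ⊢ N : G
    (WF : GT → Prop)                      -- well-formedness of global types
    (EV : GT → Set (GEvent P L))          -- E(G)
    (hEV : ∀ G, EV G = {γ | ∃ σ, TrOf G σ ∧ γ = ⟦evFull σ⟧})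
    (h1 : ∀ G σ, TrOf G σ → GStep G σ)
    (h2 : ∀ G σ, GStep G σ → (⟦evFull σ⟧ : GEvent P L) ∈ EV G)
    (h3 : ∀ N G σ, Types N G → GStep G σ → NStep N σ)  -- Session Fidelity
    (h4 : ∀ N G σ, Types N G → NStep N σ → GStep G σ)  -- Subject Reduction
    (G G' : GT) (N : Net) (hwf : WF G) (hwf' : WF G')
    (hT : Types N G) (hT' : Types N G') :
    EV G = EV G' :=
  unique_PES_interpretation_general TrOf GStep NStep Types EV hEV h1 h2 h3 h4 G G' N hT hT'
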